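/- Let M₁, M₂ be sets with operators whose L^p spectra are σ₁, σ₂ ⊆ ℂ, and suppose the L^p spectrum of the product satisfies σ(Δ_{M₁×M₂,p}) = σ₁ + σ₂ := {a + b : a ∈ σ₁, b ∈ σ₂}. Prove the following elementary consequence used in the paper: if σ₁ ⊇ P₁ and σ₂ ⊇ P₂ for parabolic regions P₁ = {ρ₁² − z² : |Re z| ≤ ρ₁δ} and P₂ = {ρ₂² − z² : |Re z| ≤ ρ₂δ} with δ = |2/p − 1| and ρ₁, ρ₂ > 0, then σ₁ + σ₂ ⊇ P where P = {(ρ₁² + ρ₂²) − z² : z ∈ ℂ, |Re z| ≤ √(ρ₁² + ρ₂²)·δ}. -/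

import Mathlib

/-!
Write `ρ² − z² = (ρ₁² − (ρ₁z/ρ)²) + (ρ₂² − (ρ₂z/ρ)²)`, which holds because `ρ₁² + ρ₂² = ρ²`;
scaling `z` by `ρᵢ/ρ` scales the bound `|Re z| ≤ ρδ` to `|Re (ρᵢz/ρ)| ≤ ρᵢδ`.
-/

open Pointwise

def parabolicRegion (ρ δ : ℝ) : Set ℂ :=
  {w | ∃ z : ℂ, |z.re| ≤ ρ * δ ∧ w = (ρ : ℂ) ^ 2 - z ^ 2}

theorem sq_sub_sq_mem_parabolicRegion_of_scale {ρ r δ : ℝ} (hρ : 0 < ρ) (hr : 0 ≤ r) {z : ℂ}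
    (hz : |z.re| ≤ ρ * δ) : (r : ℂ) ^ 2 - ((r / ρ : ℝ) * z) ^ 2 ∈ parabolicRegion r δ := by
  refine ⟨(r / ρ : ℝ) * z, ?_, rfl⟩
  rw [Complex.re_ofReal_mul, abs_mul, abs_of_nonneg (by positivity)]
  calc r / ρ * |z.re| ≤ r / ρ * (ρ * δ) := by gcongr
    _ = r * δ := by field_simp

theorem parabolicRegion_subset_add_of_sq_add_sq {ρ ρ₁ ρ₂ δ : ℝ} (hρ : 0 < ρ) (hρ₁ : 0 ≤ ρ₁)
    (hρ₂ : 0 ≤ ρ₂) (hsq : ρ₁ ^ 2 + ρ₂ ^ 2 = ρ ^ 2) :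
    parabolicRegion ρ δ ⊆ parabolicRegion ρ₁ δ + parabolicRegion ρ₂ δ := by
  rintro w ⟨z, hz, rfl⟩
  refine ⟨_, sq_sub_sq_mem_parabolicRegion_of_scale hρ hρ₁ hz,
    _, sq_sub_sq_mem_parabolicRegion_of_scale hρ hρ₂ hz, ?_⟩
  have hρC : (ρ : ℂ) ≠ 0 := by exact_mod_cast hρ.ne'
  have hsqC : (ρ₁ : ℂ) ^ 2 + (ρ₂ : ℂ) ^ 2 = (ρ : ℂ) ^ 2 := by exact_mod_cast hsq
  push_cast
  field_simp
  linear_combination (ρ ^ 2 - z ^ 2 : ℂ) * hsqC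

theorem parabolic_region_subset_sum_of_spectra_general
    (δ ρ₁ ρ₂ : ℝ)
    (hρ₁ : 0 < ρ₁) (hρ₂ : 0 < ρ₂) (σ₁ σ₂ : Set ℂ)
    (hs₁ : {w : ℂ | ∃ z : ℂ, |z.re| ≤ ρ₁ * δ ∧ w = (ρ₁ : ℂ) ^ 2 - z ^ 2} ⊆ σ₁)
    (hs₂ : {w : ℂ | ∃ z : ℂ, |z.re| ≤ ρ₂ * δ ∧ w = (ρ₂ : ℂ) ^ 2 - z ^ 2} ⊆ σ₂) :
    {w : ℂ | ∃ z : ℂ, |z.re| ≤ Real.sqrt (ρ₁ ^ 2 + ρ₂ ^ 2) * δ ∧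
        w = ((ρ₁ ^ 2 + ρ₂ ^ 2 : ℝ) : ℂ) - z ^ 2} ⊆ {w : ℂ | ∃ a ∈ σ₁, ∃ b ∈ σ₂, w = a + b} := by
  have hsq : Real.sqrt (ρ₁ ^ 2 + ρ₂ ^ 2) ^ 2 = ρ₁ ^ 2 + ρ₂ ^ 2 := Real.sq_sqrt (by positivity)
  have hρ : 0 < Real.sqrt (ρ₁ ^ 2 + ρ₂ ^ 2) := by positivity
  have hP : parabolicRegion (Real.sqrt (ρ₁ ^ 2 + ρ₂ ^ 2)) δ ⊆ σ₁ + σ₂ :=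
    (parabolicRegion_subset_add_of_sq_add_sq hρ hρ₁.le hρ₂.le hsq.symm).trans
      (Set.add_subset_add hs₁ hs₂)
  have hcast : ((ρ₁ ^ 2 + ρ₂ ^ 2 : ℝ) : ℂ) = (Real.sqrt (ρ₁ ^ 2 + ρ₂ ^ 2) : ℂ) ^ 2 := by
    rw [← Complex.ofReal_pow, hsq]
  rintro w ⟨z, hz, rfl⟩
  rw [hcast]
  obtain ⟨a, ha, b, hb, hab⟩ := hP ⟨z, hz, rfl⟩
  exact ⟨a, ha, b, hb, hab.symm⟩

/-- If the `L^p` spectra `σ₁, σ₂` of the factors contain the parabolic regions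
`P(ρᵢ, δ) = {ρᵢ² − z² : |Re z| ≤ ρᵢδ}` with `δ = |2/p − 1|`, then the set-theoretic sum
`σ₁ + σ₂` (which is the `L^p` spectrum of the Riemannian product) contains the parabolic
region `P(√(ρ₁² + ρ₂²), δ)`. -/
theorem parabolic_region_subset_sum_of_spectra
    (p : ℝ) (hp : 1 ≤ p) (δ ρ₁ ρ₂ : ℝ) (hδ : δ = |2 / p - 1|)
    (hρ₁ : 0 < ρ₁) (hρ₂ : 0 < ρ₂) (σ₁ σ₂ : Set ℂ)
    (hs₁ : {w : ℂ | ∃ z : ℂ, |z.re| ≤ ρ₁ * δ ∧ w = (ρ₁ : ℂ) ^ 2 - z ^ 2} ⊆ σ₁)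
    (hs₂ : {w : ℂ | ∃ z : ℂ, |z.re| ≤ ρ₂ * δ ∧ w = (ρ₂ : ℂ) ^ 2 - z ^ 2} ⊆ σ₂) :
    {w : ℂ | ∃ z : ℂ, |z.re| ≤ Real.sqrt (ρ₁ ^ 2 + ρ₂ ^ 2) * δ ∧
        w = ((ρ₁ ^ 2 + ρ₂ ^ 2 : ℝ) : ℂ) - z ^ 2} ⊆ {w : ℂ | ∃ a ∈ σ₁, ∃ b ∈ σ₂, w = a + b} :=
  parabolic_region_subset_sum_of_spectra_general δ ρ₁ ρ₂ hρ₁ hρ₂ σ₁ σ₂ hs₁ hs₂
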